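/- arXiv:2512.01760 — 2 statements merged into one kernel-verified Lean document; each statement's English description precedes it below -/
import Mathlib

section
/- For every integer 1 ≤ d ≤ n − 1, the chromatic number of the binary projective space satisfies χ_2(n) ≤ χ_2(d) + χ_2(n + 1 − d) − 1. -/
/-- A coloring of the nonzero vectors of `F_2^n` with `k` colors is proper if no
triple `{x, y, x+y}` of distinct nonzero vectors is monochromatic. -/
def ProperColoring2 (n k : ℕ) (c : (Fin n → ZMod 2) → Fin k) : Prop :=
  ∀ x y : Fin n → ZMod 2, x ≠ 0 → y ≠ 0 → x ≠ y →
    ¬ (c x = c y ∧ c y = c (x + y))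

/-- `chi2 n` : the chromatic number of the binary projective space `PG(n-1,2)`,
i.e. the least number of colors needed to color the nonzero vectors of `F_2^n`
with no monochromatic triple `{x, y, x+y}`. -/
noncomputable def chi2 (n : ℕ) : ℕ :=
  sInf {k : ℕ | ∃ c : (Fin n → ZMod 2) → Fin k, ProperColoring2 n k c}

/-!
Split `F₂^(k+m) = F₂^k × F₂^m`. Take optimal colorings `c₁` of `F₂^(k+1) = F₂^k × F₂` and
`c₂` of `F₂^m`, and single out one color of `c₂` (it becomes `none` in `glueColoring`). A vector
`(w, u)` with `u = 0`, or with `u` of the singled-out color, gets the color `c₁ (w, 0)` resp.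
`c₁ (w, 1)`; any other vector gets its color `c₂ u`. A monochromatic line of the second kind
projects to one of `c₂`. On a monochromatic line of the first kind the map `(w, u) ↦ (w, [u ≠ 0])`
is additive, because two points with nonzero `u`-parts of the singled-out color must have the same
`u`-part, so the line maps to a monochromatic line of `c₁`.
-/

-- In characteristic `2` the condition `x + y ≠ 0` just says `x ≠ y`.
def IsProperLineColoring {V α : Type*} [AddZeroClass V] (c : V → α) : Prop :=
  ∀ x y : V, x ≠ 0 → y ≠ 0 → x + y ≠ 0 → ¬ (c x = c y ∧ c y = c (x + y))

namespace IsProperLineColoring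

variable {V V' α β : Type*} [AddZeroClass V] [AddZeroClass V'] {c : V → α}

theorem comp_injective (hc : IsProperLineColoring c) {f : α → β} (hf : Function.Injective f) :
    IsProperLineColoring (f ∘ c) := fun x y hx hy hxy ⟨h₁, h₂⟩ =>
  hc x y hx hy hxy ⟨hf h₁, hf h₂⟩

theorem comp_addMonoidHom {F : Type*} [FunLike F V' V] [AddMonoidHomClass F V' V]
    (hc : IsProperLineColoring c) (f : F) (hf : Function.Injective f) :
    IsProperLineColoring (c ∘ f) := by
  intro x y hx hy hxy h
  refine hc (f x) (f y) ?_ ?_ ?_ (by simpa only [Function.comp, map_add] using h) <;>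
    simpa only [← map_add, ne_eq, map_eq_zero_iff f hf]

end IsProperLineColoring

theorem properColoring2_iff {n k : ℕ} {c : (Fin n → ZMod 2) → Fin k} :
    ProperColoring2 n k c ↔ IsProperLineColoring c := by
  have h (x y : Fin n → ZMod 2) : x + y ≠ 0 ↔ x ≠ y := by
    rw [ne_eq, add_eq_zero_iff_eq_neg, ZModModule.neg_eq_self]
  simp only [ProperColoring2, IsProperLineColoring, h]

section Glue

variable {W U α β : Type*} [Zero U] [DecidableEq U]

def collapseSnd (p : W × U) : W × ZMod 2 := (p.1, if p.2 = 0 then 0 else 1)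

def glueColoring (c₁ : W × ZMod 2 → α) (c₂ : U → Option β) (p : W × U) : α ⊕ β :=
  (if p.2 = 0 then none else c₂ p.2).elim (.inl (c₁ (collapseSnd p))) .inr

variable {c₁ : W × ZMod 2 → α} {c₂ : U → Option β} {p : W × U}

theorem glueColoring_eq_inl_iff {a : α} :
    glueColoring c₁ c₂ p = .inl a ↔
      (p.2 = 0 ∨ c₂ p.2 = none) ∧ c₁ (collapseSnd p) = a := by
  unfold glueColoring
  by_cases h : p.2 = 0 <;> [simp [h]; cases c₂ p.2 <;> simp [h]]

theorem glueColoring_eq_inr_iff {b : β} :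
    glueColoring c₁ c₂ p = .inr b ↔ p.2 ≠ 0 ∧ c₂ p.2 = some b := by
  unfold glueColoring
  by_cases h : p.2 = 0 <;> [simp [h]; cases c₂ p.2 <;> simp [h]]

theorem collapseSnd_eq_zero_iff [Zero W] : collapseSnd p = 0 ↔ p = 0 := by
  by_cases h : p.2 = 0 <;> simp [collapseSnd, Prod.ext_iff, h]

end Glue

section GlueAdd

variable {W U α β : Type*} [AddZeroClass W] [AddZeroClass U] [DecidableEq U]

theorem collapseSnd_add {p q : W × U} (h : p.2 = 0 ∨ q.2 = 0 ∨ p.2 + q.2 = 0) :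
    collapseSnd (p + q) = collapseSnd p + collapseSnd q := by
  have hsnd : (if p.2 + q.2 = 0 then 0 else 1 : ZMod 2) =
      (if p.2 = 0 then 0 else 1) + (if q.2 = 0 then 0 else 1) := by
    rcases h with h | h | h
    · simp [h]
    · simp [h]
    · by_cases hp : p.2 = 0
      · simp_all
      · have hq : q.2 ≠ 0 := by intro hq; simp_all
        simp only [h, hp, hq, if_true, if_false]; decide
  simp [collapseSnd, hsnd]

theorem IsProperLineColoring.glueColoring {c₁ : W × ZMod 2 → α} {c₂ : U → Option β}
    (hc₁ : IsProperLineColoring c₁) (hc₂ : IsProperLineColoring c₂) :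
    IsProperLineColoring (glueColoring c₁ c₂) := by
  intro x y hx hy hxy ⟨hcxy, hcy⟩
  have hcx := hcxy.trans hcy
  rcases hκ : _root_.glueColoring c₁ c₂ (x + y) with a | b
  · rw [hκ, glueColoring_eq_inl_iff] at hcx hcy
    rw [glueColoring_eq_inl_iff] at hκ
    have hsplit : x.2 = 0 ∨ y.2 = 0 ∨ x.2 + y.2 = 0 := by
      by_contra! h
      obtain ⟨hx₂, hy₂, hxy₂⟩ := h
      exact hc₂ x.2 y.2 hx₂ hy₂ hxy₂
        ⟨(hcx.1.resolve_left hx₂).trans (hcy.1.resolve_left hy₂).symm,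
          (hcy.1.resolve_left hy₂).trans (hκ.1.resolve_left hxy₂).symm⟩
    refine hc₁ _ _ (mt collapseSnd_eq_zero_iff.1 hx) (mt collapseSnd_eq_zero_iff.1 hy) ?_
      ⟨hcx.2.trans hcy.2.symm, ?_⟩
    · rw [← collapseSnd_add hsplit]; exact mt collapseSnd_eq_zero_iff.1 hxy
    · rw [← collapseSnd_add hsplit]; exact hcy.2.trans hκ.2.symm
  · rw [hκ, glueColoring_eq_inr_iff] at hcx hcy
    rw [glueColoring_eq_inr_iff] at hκ
    exact hc₂ x.2 y.2 hcx.1 hcy.1 hκ.1 ⟨hcx.2.trans hcy.2.symm, hcy.2.trans hκ.2.symm⟩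

end GlueAdd

theorem exists_isProperLineColoring_chi2 (n : ℕ) :
    ∃ c : (Fin n → ZMod 2) → Fin (chi2 n), IsProperLineColoring c := by
  have hne : {k | ∃ c : (Fin n → ZMod 2) → Fin k, ProperColoring2 n k c}.Nonempty :=
    ⟨_, Fintype.equivFin _, fun _ _ _ _ hxy h => hxy ((Fintype.equivFin _).injective h.1)⟩
  obtain ⟨c, hc⟩ := Nat.sInf_mem hne
  exact ⟨c, properColoring2_iff.1 hc⟩

theorem chi2_le_card {n : ℕ} {α : Type*} [Fintype α] {c : (Fin n → ZMod 2) → α}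
    (hc : IsProperLineColoring c) : chi2 n ≤ Fintype.card α :=
  Nat.sInf_le ⟨_, properColoring2_iff.2 (hc.comp_injective (Fintype.equivFin α).injective)⟩

def finAddLinearEquivProd (k m : ℕ) :
    (Fin (k + m) → ZMod 2) ≃ₗ[ZMod 2] (Fin k → ZMod 2) × (Fin m → ZMod 2) :=
  (LinearEquiv.funCongrLeft _ _ finSumFinEquiv).trans (LinearEquiv.sumArrowLequivProdArrow _ _ _ _)

def finSuccLinearEquivProd (k : ℕ) :
    (Fin (k + 1) → ZMod 2) ≃ₗ[ZMod 2] (Fin k → ZMod 2) × ZMod 2 :=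
  (finAddLinearEquivProd k 1).trans
    ((LinearEquiv.refl _ _).prodCongr (LinearEquiv.funUnique (Fin 1) (ZMod 2) (ZMod 2)))

theorem chi2_add_le (k m : ℕ) : chi2 (k + m) ≤ chi2 (k + 1) + chi2 m - 1 := by
  obtain ⟨c₁, hc₁⟩ := exists_isProperLineColoring_chi2 (k + 1)
  obtain ⟨c₂, hc₂⟩ := exists_isProperLineColoring_chi2 m
  have hc := ((hc₁.comp_addMonoidHom _ (finSuccLinearEquivProd k).symm.injective).glueColoring
    (hc₂.comp_injective (Equiv.optionSubtypeNe (c₂ 0)).symm.injective)).comp_addMonoidHom _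
    (finAddLinearEquivProd k m).injective
  calc chi2 (k + m) ≤ Fintype.card (Fin (chi2 (k + 1)) ⊕ {b // b ≠ c₂ 0}) := chi2_le_card hc
    _ = chi2 (k + 1) + chi2 m - 1 := by
      have := (c₂ 0).pos
      simp only [ne_eq, Fintype.card_sum, Fintype.card_fin, Fintype.card_subtype_compl,
        Fintype.card_unique]
      omega

theorem chi2_recursion_general (n d : ℕ) (hd1 : 1 ≤ d) (hdn : d ≤ n - 1) :
    chi2 n ≤ chi2 d + chi2 (n + 1 - d) - 1 := by
  obtain ⟨k, rfl⟩ := Nat.exists_eq_add_of_le' hd1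
  obtain ⟨m, rfl⟩ := Nat.exists_eq_add_of_le (show k ≤ n by omega)
  simpa only [show k + m + 1 - (k + 1) = m by omega] using chi2_add_le k m

theorem chi2_recursion (n d : ℕ) (hd1 : 1 ≤ d) (hdn : d ≤ n - 1) (hn : 1 ≤ n) :
    chi2 n ≤ chi2 d + chi2 (n + 1 - d) - 1 :=
  chi2_recursion_general n d hd1 hdn
end

section
/- Let n ≥ 2, let d satisfy 1 ≤ d ≤ n − 1, write points of F_2^n \ {0} as pairs (a, u) with a ∈ F_2^{n−d}, u ∈ F_2^d. Let c_U be a proper coloring of F_2^d \ {0} (no monochromatic triple {x,y,x+y}) with a distinguished color r, and define t(a,u) = 1 if u ≠ 0 and c_U(u) = r, and t(a,u) = 0 otherwise. Then for any three distinct nonzero vectors x_1 = (a_1,u_1), x_2 = (a_2,u_2), x_3 = x_1 + x_2 such that each x_i satisfies u_i = 0 or c_U(u_i) = r, we have t(x_3) = t(x_1) + t(x_2) (mod 2) and the three vectors (a_1, t(x_1)), (a_2, t(x_2)), (a_1+a_2, t(x_3)) in F_2^{n−d+1} are distinct, nonzero, and sum to zero. -/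
/-!
Under the hypothesis on the colours, `t x = 0` exactly when the `F_2^d`-part of `x` vanishes,
so the lift `x ↦ (x.1, t x)` kills only `0`. Properness forbids the three `F_2^d`-parts of
`x₁, x₂, x₁ + x₂` from all being nonzero, and in characteristic two this leaves either none or
exactly two of them nonzero, which gives `t x₃ = t x₁ + t x₂`; the lift is therefore additive on
the triple. Three nonzero vectors `y₁, y₂, y₁ + y₂` of an `F_2`-vector space are automatically
distinct and sum to zero.
-/

namespace ZModModule

variable {G : Type*} [AddCommGroup G] [Module (ZMod 2) G]

theorem add_eq_zero_iff_eq {u v : G} : u + v = 0 ↔ u = v := by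
  rw [← sub_eq_add, sub_eq_zero]

theorem ne_and_ne_and_ne_of_eq_add {y₁ y₂ y₃ : G} (h : y₃ = y₁ + y₂) (h₁ : y₁ ≠ 0)
    (h₂ : y₂ ≠ 0) (h₃ : y₃ ≠ 0) : y₁ ≠ y₂ ∧ y₁ ≠ y₃ ∧ y₂ ≠ y₃ := by
  subst h
  exact ⟨fun h ↦ h₃ (add_eq_zero_iff_eq.mpr h), fun h ↦ h₂ (left_eq_add.mp h),
    fun h ↦ h₁ (right_eq_add.mp h)⟩

theorem ite_add_ne_zero [DecidableEq G] {u v : G} (h : u = 0 ∨ v = 0 ∨ u + v = 0) :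
    (if u + v ≠ 0 then 1 else 0 : ZMod 2) =
      (if u ≠ 0 then 1 else 0) + (if v ≠ 0 then 1 else 0) := by
  rcases h with rfl | rfl | huv
  · simp
  · simp
  · obtain rfl := add_eq_zero_iff_eq.mp huv
    by_cases hu : u = 0 <;> simp [hu, add_self]

end ZModModule

def IsProperColoring {G α : Type*} [AddCommGroup G] (c : G → α) : Prop :=
  ∀ x y : G, x ≠ 0 → y ≠ 0 → x ≠ y → ¬ (c x = c y ∧ c y = c (x + y))

theorem IsProperColoring.eq_zero_or_eq_zero_or_add_eq_zero {G α : Type*} [AddCommGroup G]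
    [Module (ZMod 2) G] {c : G → α} (hc : IsProperColoring c) {r : α} {u v : G}
    (hu : u = 0 ∨ c u = r) (hv : v = 0 ∨ c v = r) (huv : u + v = 0 ∨ c (u + v) = r) :
    u = 0 ∨ v = 0 ∨ u + v = 0 := by
  by_contra! h
  obtain ⟨hu0, hv0, huv0⟩ := h
  have hne : u ≠ v := fun h ↦ huv0 (ZModModule.add_eq_zero_iff_eq.mpr h)
  have hcu := hu.resolve_left hu0
  have hcv := hv.resolve_left hv0
  have hcuv := huv.resolve_left huv0
  exact hc u v hu0 hv0 hne ⟨hcu.trans hcv.symm, hcv.trans hcuv.symm⟩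

theorem lift_lemma_general (n d K : ℕ)
    (cU : (Fin d → ZMod 2) → Fin K)
    (hcU : ∀ x y : Fin d → ZMod 2, x ≠ 0 → y ≠ 0 → x ≠ y →
      ¬ (cU x = cU y ∧ cU y = cU (x + y)))
    (r : Fin K)
    (tf : (Fin (n - d) → ZMod 2) × (Fin d → ZMod 2) → ZMod 2)
    (htf : ∀ p : (Fin (n - d) → ZMod 2) × (Fin d → ZMod 2),
      tf p = if p.2 ≠ 0 ∧ cU p.2 = r then 1 else 0) :
    ∀ x₁ x₂ x₃ : (Fin (n - d) → ZMod 2) × (Fin d → ZMod 2),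
      x₁ ≠ 0 → x₂ ≠ 0 → x₃ ≠ 0 → x₁ ≠ x₂ → x₁ ≠ x₃ → x₂ ≠ x₃ →
      x₃ = x₁ + x₂ →
      (x₁.2 = 0 ∨ cU x₁.2 = r) → (x₂.2 = 0 ∨ cU x₂.2 = r) →
      (x₃.2 = 0 ∨ cU x₃.2 = r) →
      tf x₃ = tf x₁ + tf x₂ ∧
      ((x₁.1, tf x₁) : (Fin (n - d) → ZMod 2) × ZMod 2) ≠ (x₂.1, tf x₂) ∧
      ((x₁.1, tf x₁) : (Fin (n - d) → ZMod 2) × ZMod 2) ≠ (x₁.1 + x₂.1, tf x₃) ∧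
      ((x₂.1, tf x₂) : (Fin (n - d) → ZMod 2) × ZMod 2) ≠ (x₁.1 + x₂.1, tf x₃) ∧
      ((x₁.1, tf x₁) : (Fin (n - d) → ZMod 2) × ZMod 2) ≠ 0 ∧
      ((x₂.1, tf x₂) : (Fin (n - d) → ZMod 2) × ZMod 2) ≠ 0 ∧
      ((x₁.1 + x₂.1, tf x₃) : (Fin (n - d) → ZMod 2) × ZMod 2) ≠ 0 ∧
      ((x₁.1, tf x₁) : (Fin (n - d) → ZMod 2) × ZMod 2) + (x₂.1, tf x₂)
        + (x₁.1 + x₂.1, tf x₃) = 0 := by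
  rintro x₁ x₂ x₃ h₁ h₂ h₃ - - - rfl hc₁ hc₂ hc₃
  have ht : ∀ p, (p.2 = 0 ∨ cU p.2 = r) → tf p = if p.2 ≠ 0 then 1 else 0 := by
    rintro p hp
    by_cases hp0 : p.2 = 0 <;> simp [htf, hp0, hp.resolve_left]
  have hlift : ∀ p, (p.2 = 0 ∨ cU p.2 = r) → p ≠ 0 → (p.1, tf p) ≠ 0 := by
    rintro p hp hp0 hlift
    obtain ⟨ha, htp⟩ := Prod.mk_eq_zero.mp hlift
    rw [ht p hp] at htp
    exact hp0 (Prod.ext ha (by simpa using htp))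
  have ht₃ : tf (x₁ + x₂) = tf x₁ + tf x₂ := by
    rw [ht _ hc₃, ht _ hc₁, ht _ hc₂]
    exact ZModModule.ite_add_ne_zero
      (IsProperColoring.eq_zero_or_eq_zero_or_add_eq_zero hcU hc₁ hc₂ hc₃)
  have hy : ((x₁ + x₂).1, tf (x₁ + x₂)) = (x₁.1, tf x₁) + (x₂.1, tf x₂) := Prod.ext rfl ht₃
  obtain ⟨h₁₂, h₁₃, h₂₃⟩ := ZModModule.ne_and_ne_and_ne_of_eq_add hy
    (hlift x₁ hc₁ h₁) (hlift x₂ hc₂ h₂) (hlift _ hc₃ h₃)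
  refine ⟨ht₃, h₁₂, h₁₃, h₂₃, hlift x₁ hc₁ h₁, hlift x₂ hc₂ h₂, hlift _ hc₃ h₃, ?_⟩
  rw [← Prod.fst_add, hy, ZModModule.add_self]

theorem lift_lemma (n d K : ℕ) (hn : 2 ≤ n) (hd1 : 1 ≤ d) (hdn : d ≤ n - 1)
    (cU : (Fin d → ZMod 2) → Fin K)
    (hcU : ∀ x y : Fin d → ZMod 2, x ≠ 0 → y ≠ 0 → x ≠ y →
      ¬ (cU x = cU y ∧ cU y = cU (x + y)))
    (r : Fin K)
    (tf : (Fin (n - d) → ZMod 2) × (Fin d → ZMod 2) → ZMod 2)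
    (htf : ∀ p : (Fin (n - d) → ZMod 2) × (Fin d → ZMod 2),
      tf p = if p.2 ≠ 0 ∧ cU p.2 = r then 1 else 0) :
    ∀ x₁ x₂ x₃ : (Fin (n - d) → ZMod 2) × (Fin d → ZMod 2),
      x₁ ≠ 0 → x₂ ≠ 0 → x₃ ≠ 0 → x₁ ≠ x₂ → x₁ ≠ x₃ → x₂ ≠ x₃ →
      x₃ = x₁ + x₂ →
      (x₁.2 = 0 ∨ cU x₁.2 = r) → (x₂.2 = 0 ∨ cU x₂.2 = r) →
      (x₃.2 = 0 ∨ cU x₃.2 = r) →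
      tf x₃ = tf x₁ + tf x₂ ∧
      ((x₁.1, tf x₁) : (Fin (n - d) → ZMod 2) × ZMod 2) ≠ (x₂.1, tf x₂) ∧
      ((x₁.1, tf x₁) : (Fin (n - d) → ZMod 2) × ZMod 2) ≠ (x₁.1 + x₂.1, tf x₃) ∧
      ((x₂.1, tf x₂) : (Fin (n - d) → ZMod 2) × ZMod 2) ≠ (x₁.1 + x₂.1, tf x₃) ∧
      ((x₁.1, tf x₁) : (Fin (n - d) → ZMod 2) × ZMod 2) ≠ 0 ∧
      ((x₂.1, tf x₂) : (Fin (n - d) → ZMod 2) × ZMod 2) ≠ 0 ∧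
      ((x₁.1 + x₂.1, tf x₃) : (Fin (n - d) → ZMod 2) × ZMod 2) ≠ 0 ∧
      ((x₁.1, tf x₁) : (Fin (n - d) → ZMod 2) × ZMod 2) + (x₂.1, tf x₂)
        + (x₁.1 + x₂.1, tf x₃) = 0 :=
  lift_lemma_general n d K cU hcU r tf htf
end
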